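/- arXiv:2305.16427 — 5 statements merged into one kernel-verified Lean document; each statement's English description precedes it below -/
import Mathlib

section
/- The block-structured matrix K has exactly three distinct eigenvalues when γ_d > γ_c > γ_n > 0: λ_single = γ_d - γ_c with multiplicity N - C, λ_class = λ_single + m(γ_c - γ_n) with multiplicity C - 1, and λ_global = λ_class + Nγ_n with multiplicity 1; in particular K is positive definite. -/
open Matrix Module

/-!
Write `K = (γd - γc) • 1 + (γc - γn) • B + γn • J`, where `B` is the all-ones matrix on each
class block and `J` the all-ones matrix. Vectors with zero sum over every class are killed by `B`
and `J`; vectors constant on classes with zero total sum are scaled by `m` under `B` and killed by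
`J`; the constant vector is scaled by `m` under `B` and by `N` under `J`. This exhibits eigenspaces
of dimensions at least `N - C`, `C - 1` and `1` for three distinct eigenvalues. Since eigenspaces
for distinct eigenvalues are independent and these dimensions already add up to `N`, the bounds
are equalities and there is no other eigenvalue. All three eigenvalues are positive, so the
symmetric matrix `K` is positive definite.
-/

theorem iSupIndep.finrank_biSup {K V ι : Type*} [DivisionRing K] [AddCommGroup V] [Module K V]
    [FiniteDimensional K V] {p : ι → Submodule K V} (hp : iSupIndep p) (s : Finset ι) :
    finrank K ↥(⨆ i ∈ s, p i) = ∑ i ∈ s, finrank K (p i) := by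
  classical
  induction s using Finset.induction_on with
  | empty => simp
  | insert a s ha ih =>
    have hdisj : Disjoint (p a) (⨆ i ∈ s, p i) := by
      simpa only [Finset.iSup_coe] using hp.disjoint_biSup (y := ↑s) ha
    rw [Finset.iSup_insert, Finset.sum_insert ha, ← ih,
      ← Submodule.finrank_sup_add_finrank_inf_eq, hdisj.eq_bot, finrank_bot, add_zero]

theorem Module.End.finrank_eigenspace_eq_of_sum_eq_finrank {K V ι : Type*} [Field K]
    [AddCommGroup V] [Module K V] [FiniteDimensional K V] [Fintype ι] (f : End K V)
    {ev : ι → K} (hev : Function.Injective ev) {d : ι → ℕ}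
    (hd : ∀ i, d i ≤ finrank K (f.eigenspace (ev i))) (hsum : ∑ i, d i = finrank K V) :
    (∀ i, finrank K (f.eigenspace (ev i)) = d i) ∧
      ∀ μ, f.HasEigenvalue μ → μ ∈ Set.range ev := by
  have hind : iSupIndep fun i => f.eigenspace (ev i) := f.eigenspaces_iSupIndep.comp hev
  have hfin := hind.finrank_biSup Finset.univ
  rw [← Finset.iSup_coe, Finset.coe_univ, iSup_univ] at hfin
  have hle : ∑ i, finrank K (f.eigenspace (ev i)) ≤ ∑ i, d i :=
    hsum ▸ hfin ▸ Submodule.finrank_le _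
  have heq : ∀ i, finrank K (f.eigenspace (ev i)) = d i := fun i =>
    ((Finset.sum_eq_sum_iff_of_le fun i _ => hd i).mp
      (le_antisymm (Finset.sum_le_sum fun i _ => hd i) hle) i (Finset.mem_univ i)).symm
  have htop : ⨆ i, f.eigenspace (ev i) = ⊤ := Submodule.eq_top_of_finrank_eq <| by
    rw [hfin, ← hsum]
    exact Finset.sum_congr rfl fun i _ => heq i
  refine ⟨heq, fun μ hμ => by_contra fun hμev => End.hasEigenvalue_iff.mp hμ ?_⟩
  refine (f.eigenspaces_iSupIndep μ).eq_bot_of_le (le_top.trans (htop.ge.trans ?_))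
  exact iSup_le fun i => le_biSup f.eigenspace fun h => hμev ⟨i, h⟩

theorem Matrix.IsHermitian.posDef_of_hasEigenvalue_pos {n : Type*} [Fintype n] [DecidableEq n]
    {A : Matrix n n ℝ} (hA : A.IsHermitian) (h : ∀ μ, End.HasEigenvalue (toLin' A) μ → 0 < μ) :
    A.PosDef :=
  hA.posDef_iff_eigenvalues_pos.mpr fun i => h _ <| End.hasEigenvalue_iff_mem_spectrum.mpr <|
    (spectrum_toLin' A).symm ▸ hA.eigenvalues_mem_spectrum_real i

section ClassStructured

variable {𝕜 α β : Type*}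

variable (α β) in
def classStructuredMatrix {R : Type*} [DecidableEq α] [DecidableEq β] (d c n : R) :
    Matrix (α × β) (α × β) R :=
  of fun i j => if i = j then d else if i.1 = j.1 then c else n

theorem classStructuredMatrix_isSymm {R : Type*} [DecidableEq α] [DecidableEq β] (d c n : R) :
    (classStructuredMatrix α β d c n).IsSymm := by
  ext i j
  simp only [classStructuredMatrix, transpose_apply, of_apply, eq_comm]

variable [Field 𝕜]

theorem finrank_map_funLeft_fst_ker_sum [Fintype α] [Nonempty α] [Nonempty β] :
    finrank 𝕜 ((LinearMap.ker (∑ a : α, LinearMap.proj a : (α → 𝕜) →ₗ[𝕜] 𝕜)).map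
        (LinearMap.funLeft 𝕜 𝕜 (Prod.fst : α × β → α))) = Fintype.card α - 1 := by
  classical
  obtain ⟨a₀⟩ := ‹Nonempty α›
  rw [← (Submodule.equivMapOfInjective _ (LinearMap.funLeft_injective_of_surjective _ _ _
    Prod.fst_surjective) _).finrank_eq]
  have hne : (∑ a : α, LinearMap.proj a : (α → 𝕜) →ₗ[𝕜] 𝕜) ≠ 0 := fun h => by
    simpa using LinearMap.congr_fun h (Pi.single a₀ 1)
  have hrank := Module.Dual.finrank_ker_add_one_of_ne_zero hne
  rw [finrank_fintype_fun_eq_card] at hrank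
  omega

def classSum [Fintype β] : (α × β → 𝕜) →ₗ[𝕜] α → 𝕜 :=
  LinearMap.pi fun a => ∑ k, LinearMap.proj (a, k)

@[simp]
theorem classSum_apply [Fintype β] (v : α × β → 𝕜) (a : α) : classSum v a = ∑ k, v (a, k) := by
  simp [classSum]

variable [Fintype α] [Fintype β]

theorem finrank_ker_classSum [Nonempty β] :
    finrank 𝕜 (LinearMap.ker (classSum : (α × β → 𝕜) →ₗ[𝕜] α → 𝕜)) =
      Fintype.card β * Fintype.card α - Fintype.card α := by
  classical
  obtain ⟨k₀⟩ := ‹Nonempty β›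
  have hsurj : Function.Surjective (classSum : (α × β → 𝕜) →ₗ[𝕜] α → 𝕜) := fun w =>
    ⟨fun i => if i.2 = k₀ then w i.1 else 0, funext fun a => by simp⟩
  have hrank := LinearMap.finrank_range_add_finrank_ker (classSum : (α × β → 𝕜) →ₗ[𝕜] α → 𝕜)
  rw [LinearMap.range_eq_top.mpr hsurj, finrank_top, finrank_fintype_fun_eq_card,
    finrank_fintype_fun_eq_card, Fintype.card_prod, mul_comm] at hrank
  omega

variable (α β) in
/-- The paper's `λ_single`, `λ_class` and `λ_global`. -/
def classStructuredSpectrum (d c n : 𝕜) : Fin 3 → 𝕜 :=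
  ![d - c, d - c + Fintype.card β * (c - n),
    d - c + Fintype.card β * (c - n) + Fintype.card β * Fintype.card α * n]

variable (α β) in
def classStructuredMultiplicity : Fin 3 → ℕ :=
  ![Fintype.card β * Fintype.card α - Fintype.card α, Fintype.card α - 1, 1]

theorem strictMono_classStructuredSpectrum [LinearOrder 𝕜] [IsStrictOrderedRing 𝕜] [Nonempty α]
    [Nonempty β] {d c n : 𝕜} (hcn : n < c) (hn : 0 < n) :
    StrictMono (classStructuredSpectrum α β d c n) := by
  refine Fin.strictMono_iff_lt_succ.mpr fun i => ?_
  fin_cases i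
  · exact lt_add_of_pos_right _ (mul_pos (by positivity) (sub_pos.mpr hcn))
  · exact lt_add_of_pos_right _ (by positivity)

variable [DecidableEq α] [DecidableEq β]

theorem classStructuredMatrix_mulVec (d c n : 𝕜) (v : α × β → 𝕜) (i : α × β) :
    (classStructuredMatrix α β d c n *ᵥ v) i =
      (d - c) * v i + (c - n) * ∑ k, v (i.1, k) + n * ∑ j, v j := by
  have hentry : ∀ j, classStructuredMatrix α β d c n i j * v j =
      (d - c) * (if i = j then v j else 0) + (c - n) * (if i.1 = j.1 then v j else 0) +
        n * v j := by
    intro j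
    by_cases hij : i = j
    · subst hij; simp [classStructuredMatrix]; ring
    · by_cases h1 : i.1 = j.1 <;> simp [classStructuredMatrix, hij, h1]; ring
  have hclass : ∑ j : α × β, (if i.1 = j.1 then v j else 0) = ∑ k, v (i.1, k) := by
    rw [Fintype.sum_prod_type, Fintype.sum_eq_single i.1 fun a ha => by simp [Ne.symm ha]]
    simp
  simp only [mulVec, dotProduct, hentry, Finset.sum_add_distrib, ← Finset.mul_sum, hclass,
    Finset.sum_ite_eq, Finset.mem_univ, if_true]

variable (d c n : 𝕜)

theorem ker_classSum_le_eigenspace :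
    LinearMap.ker (classSum : (α × β → 𝕜) →ₗ[𝕜] α → 𝕜) ≤
      End.eigenspace (toLin' (classStructuredMatrix α β d c n)) (d - c) := by
  intro v hv
  have hclass : ∀ a, ∑ k, v (a, k) = 0 := fun a => by simpa using congr_fun hv a
  have htotal : ∑ j, v j = 0 := by
    rw [Fintype.sum_prod_type]
    exact Finset.sum_eq_zero fun a _ => hclass a
  rw [End.mem_eigenspace_iff]
  ext i
  simp [classStructuredMatrix_mulVec, hclass, htotal]

theorem map_funLeft_fst_ker_sum_le_eigenspace :
    (LinearMap.ker (∑ a : α, LinearMap.proj a : (α → 𝕜) →ₗ[𝕜] 𝕜)).map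
        (LinearMap.funLeft 𝕜 𝕜 (Prod.fst : α × β → α)) ≤
      End.eigenspace (toLin' (classStructuredMatrix α β d c n))
        (d - c + Fintype.card β * (c - n)) := by
  rintro _ ⟨w, hw, rfl⟩
  have hw : ∑ a, w a = 0 := by simpa using hw
  rw [End.mem_eigenspace_iff]
  ext i
  simp [classStructuredMatrix_mulVec, Fintype.sum_prod_type, ← Finset.mul_sum, hw]
  ring

theorem const_mem_eigenspace :
    (fun _ : α × β => (1 : 𝕜)) ∈ End.eigenspace (toLin' (classStructuredMatrix α β d c n))
        (d - c + Fintype.card β * (c - n) + Fintype.card β * Fintype.card α * n) := by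
  rw [End.mem_eigenspace_iff]
  ext i
  simp [classStructuredMatrix_mulVec]
  ring

variable [LinearOrder 𝕜] [IsStrictOrderedRing 𝕜] {d c n}

theorem finrank_eigenspace_classStructuredMatrix (hα : 2 ≤ Fintype.card α)
    (hβ : 2 ≤ Fintype.card β) (hcn : n < c) (hn : 0 < n) :
    (∀ i, finrank 𝕜 (End.eigenspace (toLin' (classStructuredMatrix α β d c n))
        (classStructuredSpectrum α β d c n i)) = classStructuredMultiplicity α β i) ∧
      ∀ μ, End.HasEigenvalue (toLin' (classStructuredMatrix α β d c n)) μ ↔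
        μ ∈ Set.range (classStructuredSpectrum α β d c n) := by
  have : Nonempty α := Fintype.card_pos_iff.mp (by omega)
  have : Nonempty β := Fintype.card_pos_iff.mp (by omega)
  have hbound : ∀ i, classStructuredMultiplicity α β i ≤ finrank 𝕜
      (End.eigenspace (toLin' (classStructuredMatrix α β d c n))
        (classStructuredSpectrum α β d c n i)) := by
    intro i
    fin_cases i
    · exact finrank_ker_classSum.ge.trans
        (Submodule.finrank_mono (ker_classSum_le_eigenspace d c n))
    · exact finrank_map_funLeft_fst_ker_sum.ge.trans
        (Submodule.finrank_mono (map_funLeft_fst_ker_sum_le_eigenspace d c n))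
    · exact Submodule.one_le_finrank_iff.mpr <| (Submodule.ne_bot_iff _).mpr
        ⟨_, const_mem_eigenspace d c n, one_ne_zero⟩
  have hαβ : Fintype.card α < Fintype.card β * Fintype.card α := by nlinarith
  have hsum : ∑ i, classStructuredMultiplicity α β i = Fintype.card (α × β) := by
    simp [classStructuredMultiplicity, Fin.sum_univ_three, Nat.mul_comm (Fintype.card α)]
    omega
  have hpos : ∀ i, 0 < classStructuredMultiplicity α β i := by
    intro i
    fin_cases i <;> simp [classStructuredMultiplicity] <;> omega
  obtain ⟨hdim, hspec⟩ := End.finrank_eigenspace_eq_of_sum_eq_finrank _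
    (strictMono_classStructuredSpectrum hcn hn).injective hbound
    (hsum.trans (finrank_fintype_fun_eq_card 𝕜).symm)
  refine ⟨hdim, fun μ => ⟨hspec μ, ?_⟩⟩
  rintro ⟨i, rfl⟩
  exact End.hasEigenvalue_iff.mpr fun h => (hpos i).ne' (by rw [← hdim i, h, finrank_bot])

theorem classStructuredMatrix_posDef {d c n : ℝ} (hα : 2 ≤ Fintype.card α)
    (hβ : 2 ≤ Fintype.card β) (hdc : c < d) (hcn : n < c) (hn : 0 < n) : (classStructuredMatrix α β d c n).PosDef := by
  have : Nonempty α := Fintype.card_pos_iff.mp (by omega)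
  have : Nonempty β := Fintype.card_pos_iff.mp (by omega)
  have hsymm := isHermitian_iff_isSymm.mpr (classStructuredMatrix_isSymm (α := α) (β := β) d c n)
  refine hsymm.posDef_of_hasEigenvalue_pos fun μ hμ => ?_
  obtain ⟨i, rfl⟩ := ((finrank_eigenspace_classStructuredMatrix hα hβ hcn hn).2 μ).mp hμ
  exact (sub_pos.mpr hdc).trans_le
    ((strictMono_classStructuredSpectrum hcn hn).monotone (Fin.zero_le i))

end ClassStructured

/-- The block-structured matrix `K` (with `γd > γc > γn > 0`) has exactly the three
eigenvalues `λ_single = γd - γc` (multiplicity `N - C`),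
`λ_class = λ_single + m (γc - γn)` (multiplicity `C - 1`), and
`λ_global = λ_class + N γn` (multiplicity `1`), where `N = m C`; moreover `K` is
positive definite. -/
theorem stmt_3 (C m : ℕ) (hC : 2 ≤ C) (hm : 2 ≤ m) (γd γc γn : ℝ)
    (h1 : γc < γd) (h2 : γn < γc) (h3 : 0 < γn)
    (K : Matrix (Fin C × Fin m) (Fin C × Fin m) ℝ)
    (hK : ∀ i j, K i j = if i = j then γd else if i.1 = j.1 then γc else γn) :
    (∀ μ : ℝ, Module.End.HasEigenvalue (Matrix.toLin' K) μ ↔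
        (μ = γd - γc ∨ μ = (γd - γc) + (m : ℝ) * (γc - γn) ∨
          μ = (γd - γc) + (m : ℝ) * (γc - γn) + ((m : ℝ) * (C : ℝ)) * γn)) ∧
    Module.finrank ℝ (Module.End.eigenspace (Matrix.toLin' K) (γd - γc)) = m * C - C ∧
    Module.finrank ℝ
      (Module.End.eigenspace (Matrix.toLin' K) ((γd - γc) + (m : ℝ) * (γc - γn))) = C - 1 ∧
    Module.finrank ℝ
      (Module.End.eigenspace (Matrix.toLin' K)
        ((γd - γc) + (m : ℝ) * (γc - γn) + ((m : ℝ) * (C : ℝ)) * γn)) = 1 ∧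
    K.PosDef := by
  obtain rfl : K = classStructuredMatrix (Fin C) (Fin m) γd γc γn := Matrix.ext hK
  have hC' : 2 ≤ Fintype.card (Fin C) := by simpa
  have hm' : 2 ≤ Fintype.card (Fin m) := by simpa
  obtain ⟨hdim, hiff⟩ := finrank_eigenspace_classStructuredMatrix (d := γd) hC' hm' h2 h3
  unfold classStructuredSpectrum classStructuredMultiplicity at hdim
  unfold classStructuredSpectrum at hiff
  rw [Fintype.card_fin, Fintype.card_fin] at hdim hiff
  refine ⟨fun μ => (hiff μ).trans ?_, hdim 0, hdim 1, hdim 2,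
    classStructuredMatrix_posDef hC' hm' h1 h2 h3⟩
  simp only [Set.mem_range, Fin.exists_fin_succ, Fin.exists_fin_zero, cons_val_zero, cons_val_succ,
    or_false, eq_comm (b := μ)]
end

section
/- If r^{t+1} = (I - ηK)r^t with K block-structured, then the global mean satisfies ⟨r^{t+1}⟩ = (1 - ηλ_global)⟨r^t⟩ and the individual deviations satisfy r^{t+1}_i - ⟨r^{t+1}⟩_c = (1 - ηλ_single)(r^t_i - ⟨r^t⟩_c) for every sample i in class c, where λ_global = (γ_d - γ_c) + m(γ_c - γ_n) + Nγ_n and λ_single = γ_d - γ_c. -/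
/-!
Since `K = (γd - γc) I + (γc - γn) B + γn J`, with `B` the indicator of equal classes and `J` the
all-ones matrix, `(K r)_x = (γd - γc) r_x + (γc - γn) S_c + γn T`, where `S_c` is the sum of `r`
over the class `c` of `x` and `T` its total sum. Summing over all samples gives `λ_global T`;
subtracting the class mean cancels the `S_c` and `T` terms and leaves `(γd - γc)` times the
deviation. Both quantities are linear in `r`, so `I - ηK` multiplies them by `1 - ηλ`.
-/

open Matrix

variable {α β : Type*} [DecidableEq α] [DecidableEq β]

section CommRing

variable {R : Type*} [CommRing R] (γd γc γn : R)

def blockKernel : Matrix (α × β) (α × β) R :=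
  of fun i j => if i = j then γd else if i.1 = j.1 then γc else γn

theorem blockKernel_apply (i j : α × β) :
    blockKernel γd γc γn i j =
      (γd - γc) * (if i = j then 1 else 0) + (γc - γn) * (if i.1 = j.1 then 1 else 0) +
        γn := by
  by_cases hij : i = j
  · simp [blockKernel, hij]
  · by_cases hclass : i.1 = j.1 <;> simp [blockKernel, hij, hclass]

variable [Fintype α] [Fintype β]

theorem blockKernel_mulVec_apply (r : α × β → R) (x : α × β) :
    (blockKernel γd γc γn *ᵥ r) x =
      (γd - γc) * r x + (γc - γn) * ∑ b, r (x.1, b) + γn * ∑ j, r j := by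
  have hclass : ∑ j : α × β, (if x.1 = j.1 then (1 : R) else 0) * r j = ∑ b, r (x.1, b) := by
    simp [Fintype.sum_prod_type_right, ite_mul]
  simp only [mulVec, dotProduct, blockKernel_apply, add_mul, mul_assoc, Finset.sum_add_distrib,
    ← Finset.mul_sum, hclass]
  simp [ite_mul]

theorem sum_blockKernel_mulVec (r : α × β → R) :
    ∑ x, (blockKernel γd γc γn *ᵥ r) x =
      ((γd - γc) + Fintype.card β * (γc - γn) + Fintype.card (α × β) * γn) *
        ∑ x, r x := by
  have hclass : ∑ x : α × β, ∑ b, r (x.1, b) = Fintype.card β * ∑ x, r x := by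
    simp [Fintype.sum_prod_type, Finset.mul_sum]
  simp only [blockKernel_mulVec_apply, Finset.sum_add_distrib, ← Finset.mul_sum, hclass,
    Finset.sum_const, Finset.card_univ, nsmul_eq_mul]
  ring

theorem sum_blockKernel_mulVec_class (r : α × β → R) (a : α) :
    ∑ b, (blockKernel γd γc γn *ᵥ r) (a, b) =
      (γd - γc) * ∑ b, r (a, b) +
        Fintype.card β * ((γc - γn) * ∑ b, r (a, b) + γn * ∑ j, r j) := by
  simp only [blockKernel_mulVec_apply, Finset.sum_add_distrib, ← Finset.mul_sum,
    Finset.sum_const, Finset.card_univ, nsmul_eq_mul]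
  ring

end CommRing

theorem blockKernel_mulVec_sub_classMean [Fintype α] [Fintype β] {𝕜 : Type*} [Field 𝕜]
    [CharZero 𝕜] (γd γc γn : 𝕜) (r : α × β → 𝕜) (a : α) (b : β) :
    (blockKernel γd γc γn *ᵥ r) (a, b) -
        (∑ b', (blockKernel γd γc γn *ᵥ r) (a, b')) / Fintype.card β =
      (γd - γc) * (r (a, b) - (∑ b', r (a, b')) / Fintype.card β) := by
  have : Nonempty β := ⟨b⟩
  have hβ : (Fintype.card β : 𝕜) ≠ 0 := Nat.cast_ne_zero.mpr Fintype.card_ne_zero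
  rw [sum_blockKernel_mulVec_class, blockKernel_mulVec_apply]
  field_simp
  ring

theorem stmt_6_general (C m : ℕ) (η γd γc γn : ℝ)
    (K : Matrix (Fin C × Fin m) (Fin C × Fin m) ℝ)
    (hK : ∀ i j, K i j = if i = j then γd else if i.1 = j.1 then γc else γn)
    (r r' : Fin C × Fin m → ℝ)
    (hr : r' = (1 - η • K).mulVec r) :
    ((∑ j, r' j) / ((m : ℝ) * C) =
        (1 - η * ((γd - γc) + (m : ℝ) * (γc - γn) + ((m : ℝ) * (C : ℝ)) * γn)) *
          ((∑ j, r j) / ((m : ℝ) * C))) ∧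
    (∀ (c : Fin C) (i : Fin m),
      r' (c, i) - (∑ i', r' (c, i')) / m =
        (1 - η * (γd - γc)) * (r (c, i) - (∑ i', r (c, i')) / m)) := by
  obtain rfl : K = blockKernel γd γc γn := ext hK
  have hstep : ∀ x, r' x = r x - η * (blockKernel γd γc γn *ᵥ r) x := by
    simp [hr, sub_mulVec, smul_mulVec]
  constructor
  · simp only [hstep, Finset.sum_sub_distrib, ← Finset.mul_sum, sum_blockKernel_mulVec,
      Fintype.card_prod, Fintype.card_fin, Nat.cast_mul]
    ring
  · intro c i
    have hdev := blockKernel_mulVec_sub_classMean γd γc γn r c i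
    simp only [Fintype.card_fin] at hdev
    simp only [hstep, Finset.sum_sub_distrib, ← Finset.mul_sum]
    linear_combination (-η) * hdev

/-- If `r' = (I - η K) r` with `K` block-structured, then the global mean satisfies
`⟨r'⟩ = (1 - η λ_global) ⟨r⟩`, and for every sample `(c, i)` the individual deviation
satisfies `r'_(c,i) - ⟨r'⟩_c = (1 - η λ_single) (r_(c,i) - ⟨r⟩_c)`, where
`λ_global = (γd - γc) + m (γc - γn) + N γn` and `λ_single = γd - γc`. -/
theorem stmt_6 (C m : ℕ) (hC : 0 < C) (hm : 0 < m) (η γd γc γn : ℝ)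
    (K : Matrix (Fin C × Fin m) (Fin C × Fin m) ℝ)
    (hK : ∀ i j, K i j = if i = j then γd else if i.1 = j.1 then γc else γn)
    (r r' : Fin C × Fin m → ℝ)
    (hr : r' = (1 - η • K).mulVec r) :
    ((∑ j, r' j) / ((m : ℝ) * C) =
        (1 - η * ((γd - γc) + (m : ℝ) * (γc - γn) + ((m : ℝ) * (C : ℝ)) * γn)) *
          ((∑ j, r j) / ((m : ℝ) * C))) ∧
    (∀ (c : Fin C) (i : Fin m),
      r' (c, i) - (∑ i', r' (c, i')) / m =
        (1 - η * (γd - γc)) * (r (c, i) - (∑ i', r (c, i')) / m)) :=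
  stmt_6_general C m η γd γc γn K hK r r' hr
end

section
/- Consider the ODE system Ḣ_2 = -μ(Ẽ + m H_2 H_2^⊤) H_2 where Ẽ ∈ ℝ^{n×n} is a fixed positive semidefinite matrix and μ, m > 0. Then the Gram matrix G(t) = H_2(t) H_2(t)^⊤ satisfies Ġ = -μ(Ẽ G + G Ẽ + 2m G²), and consequently the trace satisfies d/dt tr(G) ≤ -2μm · tr(G²) ≤ -(2μm/n) tr(G)², hence tr(G(t)) → 0 as t → ∞; in particular H_2(t) → 0. -/
/-!
Differentiating `G = H₂ H₂ᵀ` with the product rule and using `Ẽᵀ = Ẽ` gives the Riccati-type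
equation for `G`. Taking traces, `tr(Ẽ G) = tr(H₂ᵀ Ẽ H₂) ≥ 0`, so `(tr G)' ≤ -2μm tr(G²)`, and
since `G` is symmetric, `tr(G²) = ∑ Gᵢⱼ² ≥ ∑ Gᵢᵢ² ≥ (tr G)² / n` by Cauchy–Schwarz.
A nonnegative function with `f' ≤ -c f²` is antitone, and it cannot stay above any `ε > 0`,
since then it would decrease at least linearly; hence `tr G → 0`, and every entry of `H₂`
is controlled by `(H₂)ᵢⱼ² ≤ tr G`.
-/

open Matrix Filter Topology Set

section Calculus

theorem antitoneOn_Ici_of_hasDerivAt_nonpos {f f' : ℝ → ℝ} {a : ℝ}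
    (hf : ∀ t, a ≤ t → HasDerivAt f (f' t) t) (hf' : ∀ t, a ≤ t → f' t ≤ 0) :
    AntitoneOn f (Ici a) :=
  antitoneOn_of_hasDerivWithinAt_nonpos (convex_Ici a)
    (fun t ht => (hf t ht).continuousAt.continuousWithinAt)
    (fun t ht => (hf t (interior_subset ht)).hasDerivWithinAt)
    (fun t ht => hf' t (interior_subset ht))

theorem exists_lt_of_hasDerivAt_le_neg_sq {f f' : ℝ → ℝ} {a c ε : ℝ} (hc : 0 < c) (hε : 0 < ε)
    (hf : ∀ t, a ≤ t → HasDerivAt f (f' t) t) (hf' : ∀ t, a ≤ t → f' t ≤ -c * f t ^ 2) :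
    ∃ T, a ≤ T ∧ f T < ε := by
  by_contra! hge
  set δ := c * ε ^ 2
  have hδ : 0 < δ := by positivity
  have hanti : AntitoneOn (fun t => f t + δ * t) (Ici a) := by
    refine antitoneOn_Ici_of_hasDerivAt_nonpos
      (fun t ht => (hf t ht).add ((hasDerivAt_id t).const_mul δ)) fun t ht => ?_
    have hsq : ε ^ 2 ≤ f t ^ 2 := pow_le_pow_left₀ hε.le (hge t ht) 2
    nlinarith [hf' t ht]
  set T := a + (f a - ε + 1) / δ
  have haT : a ≤ T := le_add_of_nonneg_right (div_nonneg (by linarith [hge a le_rfl]) hδ.le)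
  have hdrop : δ * (T - a) = f a - ε + 1 := by
    simp only [T, add_sub_cancel_left]
    field_simp
  have := hanti self_mem_Ici haT haT
  linarith [hge T haT]

theorem tendsto_zero_of_hasDerivAt_le_neg_sq {f f' : ℝ → ℝ} {a c : ℝ} (hc : 0 < c)
    (hf : ∀ t, a ≤ t → HasDerivAt f (f' t) t) (hf' : ∀ t, a ≤ t → f' t ≤ -c * f t ^ 2)
    (hf₀ : ∀ t, a ≤ t → 0 ≤ f t) : Tendsto f atTop (𝓝 0) := by
  have hanti : AntitoneOn f (Ici a) :=
    antitoneOn_Ici_of_hasDerivAt_nonpos hf fun t ht =>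
      (hf' t ht).trans (by nlinarith [sq_nonneg (f t)])
  refine tendsto_order.2 ⟨fun b hb => ?_, fun ε hε => ?_⟩
  · filter_upwards [eventually_ge_atTop a] with t ht using hb.trans_le (hf₀ t ht)
  · obtain ⟨T, haT, hT⟩ := exists_lt_of_hasDerivAt_le_neg_sq hc hε hf hf'
    filter_upwards [eventually_ge_atTop T] with t ht
    exact (hanti haT (haT.trans ht) ht).trans_lt hT

end Calculus

namespace Matrix

variable {l n p : Type*} [Fintype n]

theorem hasDerivAt_mul_apply {A : ℝ → Matrix l n ℝ} {B : ℝ → Matrix n p ℝ}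
    {A' : Matrix l n ℝ} {B' : Matrix n p ℝ} {t : ℝ}
    (hA : ∀ i j, HasDerivAt (fun s => A s i j) (A' i j) t)
    (hB : ∀ i j, HasDerivAt (fun s => B s i j) (B' i j) t) (i : l) (j : p) :
    HasDerivAt (fun s => (A s * B s) i j) ((A' * B t + A t * B') i j) t := by
  simp only [mul_apply, add_apply, ← Finset.sum_add_distrib]
  exact HasDerivAt.fun_sum fun k _ => (hA i k).mul (hB k j)

theorem hasDerivAt_trace {A : ℝ → Matrix n n ℝ} {A' : Matrix n n ℝ} {t : ℝ}
    (hA : ∀ i j, HasDerivAt (fun s => A s i j) (A' i j) t) :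
    HasDerivAt (fun s => (A s).trace) A'.trace t :=
  HasDerivAt.fun_sum fun i _ => hA i i

theorem trace_mul_transpose_eq_sum_sq [Fintype l] (A : Matrix l n ℝ) :
    (A * Aᵀ).trace = ∑ i, ∑ j, A i j ^ 2 := by
  simp [trace, mul_apply, sq]

theorem sq_apply_le_trace_mul_transpose [Fintype l] (A : Matrix l n ℝ) (i : l) (j : n) :
    A i j ^ 2 ≤ (A * Aᵀ).trace := by
  rw [trace_mul_transpose_eq_sum_sq]
  calc A i j ^ 2 ≤ ∑ j', A i j' ^ 2 :=
        Finset.single_le_sum (fun _ _ => sq_nonneg _) (Finset.mem_univ j)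
    _ ≤ ∑ i', ∑ j', A i' j' ^ 2 :=
        Finset.single_le_sum (f := fun i' => ∑ j', A i' j' ^ 2)
          (fun _ _ => Finset.sum_nonneg fun _ _ => sq_nonneg _) (Finset.mem_univ i)

theorem sq_trace_div_card_le_trace_mul_self {G : Matrix n n ℝ} (hG : Gᵀ = G) :
    G.trace ^ 2 / Fintype.card n ≤ (G * G).trace := by
  have hfrob : (G * G).trace = ∑ i, ∑ j, G i j ^ 2 := by
    rw [← trace_mul_transpose_eq_sum_sq, hG]
  have hdiag : ∑ i, G i i ^ 2 ≤ ∑ i, ∑ j, G i j ^ 2 :=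
    Finset.sum_le_sum fun i _ => Finset.single_le_sum (f := fun j => G i j ^ 2)
      (fun _ _ => sq_nonneg _) (Finset.mem_univ i)
  rw [hfrob]
  refine div_le_of_le_mul₀ (Nat.cast_nonneg _) (by positivity) ?_
  calc G.trace ^ 2 ≤ Fintype.card n * ∑ i, G i i ^ 2 := sq_sum_le_card_mul_sum_sq
    _ ≤ (∑ i, ∑ j, G i j ^ 2) * Fintype.card n := by rw [mul_comm]; gcongr

theorem PosSemidef.trace_mul_mul_transpose_nonneg [Fintype p] {E : Matrix n n ℝ}
    (hE : E.PosSemidef) (H : Matrix n p ℝ) : 0 ≤ (E * (H * Hᵀ)).trace := by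
  have := (hE.conjTranspose_mul_mul_same H).trace_nonneg
  rwa [conjTranspose_eq_transpose_of_trivial, Matrix.mul_assoc, trace_mul_comm,
    Matrix.mul_assoc] at this

variable [Fintype p] {μ m : ℝ} {E : Matrix n n ℝ}

theorem hasDerivAt_gram_apply (hE : Eᵀ = E) {H : ℝ → Matrix n p ℝ} {t : ℝ}
    (hH : ∀ i j, HasDerivAt (fun s => H s i j)
      ((-(μ • ((E + m • (H t * (H t)ᵀ)) * H t))) i j) t) (i j : n) :
    HasDerivAt (fun s => (H s * (H s)ᵀ) i j)
      ((-(μ • (E * (H t * (H t)ᵀ) + H t * (H t)ᵀ * E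
        + (2 * m) • (H t * (H t)ᵀ * (H t * (H t)ᵀ))))) i j) t := by
  set H' := -(μ • ((E + m • (H t * (H t)ᵀ)) * H t))
  have hG' : H' * (H t)ᵀ + H t * H'ᵀ = -(μ • (E * (H t * (H t)ᵀ) + H t * (H t)ᵀ * E
      + (2 * m) • (H t * (H t)ᵀ * (H t * (H t)ᵀ)))) := by
    simp only [H', transpose_neg, transpose_smul, transpose_mul, transpose_add,
      transpose_transpose, hE, Matrix.neg_mul, Matrix.mul_neg, Matrix.smul_mul, Matrix.mul_smul,
      Matrix.add_mul, Matrix.mul_add, Matrix.mul_assoc]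
    module
  rw [← hG']
  exact hasDerivAt_mul_apply (B := fun s => (H s)ᵀ) (B' := H'ᵀ) hH (fun i j => hH j i) i j

theorem trace_gram_flow_le (hμ : 0 ≤ μ) (hE : E.PosSemidef) (H : Matrix n p ℝ) :
    (-(μ • (E * (H * Hᵀ) + H * Hᵀ * E + (2 * m) • (H * Hᵀ * (H * Hᵀ))))).trace
      ≤ -(2 * μ * m) * (H * Hᵀ * (H * Hᵀ)).trace := by
  have := hE.trace_mul_mul_transpose_nonneg H
  simp only [trace_neg, trace_smul, trace_add, smul_eq_mul]
  rw [trace_mul_comm (H * Hᵀ) E]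
  nlinarith

end Matrix

/-- For the ODE `Ḣ₂ = -μ (Ẽ + m H₂ H₂ᵀ) H₂` with `Ẽ` positive semidefinite and `μ, m > 0`,
the Gram matrix `G = H₂ H₂ᵀ` satisfies `Ġ = -μ (Ẽ G + G Ẽ + 2 m G²)`, its trace satisfies
`d/dt tr G ≤ -2 μ m tr(G²) ≤ -(2 μ m / n) (tr G)²`, hence `tr G(t) → 0` as `t → ∞`;
in particular `H₂(t) → 0`. -/
theorem stmt_12 (n k : ℕ) (hn : 0 < n) (μ m : ℝ) (hμ : 0 < μ) (hm : 0 < m)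
    (E : Matrix (Fin n) (Fin n) ℝ) (hE : E.PosSemidef)
    (H2 : ℝ → Matrix (Fin n) (Fin k) ℝ)
    (hH2 : ∀ t, 0 ≤ t → ∀ i j, HasDerivAt (fun s => H2 s i j)
      ((-(μ • ((E + m • (H2 t * (H2 t)ᵀ)) * H2 t))) i j) t)
    (G : ℝ → Matrix (Fin n) (Fin n) ℝ) (hG : ∀ t, G t = H2 t * (H2 t)ᵀ) :
    (∀ t, 0 ≤ t → ∀ i j, HasDerivAt (fun s => G s i j)
      ((-(μ • (E * G t + G t * E + (2 * m) • (G t * G t)))) i j) t) ∧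
    (∀ t, 0 ≤ t → ∃ d : ℝ, HasDerivAt (fun s => (G s).trace) d t ∧
      d ≤ -(2 * μ * m) * (G t * G t).trace ∧
      d ≤ -(2 * μ * m / n) * (G t).trace ^ 2) ∧
    Filter.Tendsto (fun t => (G t).trace) Filter.atTop (nhds 0) ∧
    (∀ i j, Filter.Tendsto (fun t => H2 t i j) Filter.atTop (nhds 0)) := by
  obtain rfl : G = fun s => H2 s * (H2 s)ᵀ := funext hG
  have hGderiv := fun t ht =>
    hasDerivAt_gram_apply (isHermitian_iff_isSymm.1 hE.isHermitian) (hH2 t ht)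
  have hd₁ := fun t => trace_gram_flow_le (m := m) hμ.le hE (H2 t)
  have hd₂ : ∀ t, -(2 * μ * m) * (H2 t * (H2 t)ᵀ * (H2 t * (H2 t)ᵀ)).trace
      ≤ -(2 * μ * m / n) * (H2 t * (H2 t)ᵀ).trace ^ 2 := fun t => by
    have hcs := sq_trace_div_card_le_trace_mul_self (G := H2 t * (H2 t)ᵀ)
      (by rw [transpose_mul, transpose_transpose])
    rw [Fintype.card_fin] at hcs
    calc _ ≤ -(2 * μ * m) * ((H2 t * (H2 t)ᵀ).trace ^ 2 / n) :=
          mul_le_mul_of_nonpos_left hcs (neg_nonpos.2 (by positivity))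
      _ = _ := by ring
  have htrace : Tendsto (fun t => (H2 t * (H2 t)ᵀ).trace) atTop (𝓝 0) :=
    tendsto_zero_of_hasDerivAt_le_neg_sq (by positivity : 0 < 2 * μ * m / n)
      (fun t ht => hasDerivAt_trace (hGderiv t ht)) (fun t _ => (hd₁ t).trans (hd₂ t))
      (fun t _ => by rw [trace_mul_transpose_eq_sum_sq]; positivity)
  refine ⟨hGderiv, fun t ht => ⟨_, hasDerivAt_trace (hGderiv t ht), hd₁ t, (hd₁ t).trans (hd₂ t)⟩,
    htrace, fun i j => ?_⟩
  refine squeeze_zero_norm (fun t => ?_) (by simpa using htrace.sqrt)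
  exact Real.abs_le_sqrt (sq_apply_le_trace_mul_transpose (H2 t) i j)
end

section
/- Suppose W ∈ ℝ^{C×n}, H_1 ∈ ℝ^{n×C}, b = (1/C)1_C satisfy W H_1 + b 1_C^⊤ = I_C, H_1 1_C = 0, and μ W^⊤ W = m H_1 H_1^⊤ for some constants μ, m > 0. Then H_1^⊤ H_1 = √(μ/m) (I_C - (1/C) 1_C 1_C^⊤) and W W^⊤ = √(m/μ) (I_C - (1/C) 1_C 1_C^⊤). -/
/-!
Let `P = I - (1/C) 1 1ᵀ`, the orthogonal projection onto `1^⊥`; the residual condition says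
`W H₁ = P`. The balance condition turns the square of each Gram matrix into a multiple of `P`:
`m (H₁ᵀ H₁)² = H₁ᵀ (m H₁ H₁ᵀ) H₁ = μ (W H₁)ᵀ (W H₁) = μ P`, and likewise `μ (W Wᵀ)² = m P`.
Both Gram matrices are positive semidefinite, and the unique nonnegative square root of `x P`
is `√x P`.
-/

open Matrix

section StarProjection

variable {A : Type*} [PartialOrder A] [Ring A] [TopologicalSpace A] [StarRing A] [Algebra ℝ A]
  [StarModule ℝ A] [StarOrderedRing A]
  [ContinuousFunctionalCalculus ℝ A IsSelfAdjoint] [NonnegSpectrumClass ℝ A]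
  [IsSemitopologicalRing A] [T2Space A] {a p : A}

theorem IsStarProjection.eq_sqrt_smul_of_sq_eq_smul (hp : IsStarProjection p) (ha : 0 ≤ a)
    {x : ℝ} (hx : 0 ≤ x) (h : a ^ 2 = x • p) : a = √x • p := by
  have hsqrt : 0 ≤ √x • p := smul_nonneg (Real.sqrt_nonneg x) hp.nonneg
  rw [← CFC.sq_eq_sq_iff a _ ha hsqrt, h, smul_pow, hp.pow_eq two_ne_zero, Real.sq_sqrt hx]

theorem IsStarProjection.eq_sqrt_div_smul_of_smul_sq_eq_smul (hp : IsStarProjection p)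
    (ha : 0 ≤ a) {b c : ℝ} (hb : 0 < b) (hc : 0 ≤ c) (h : b • a ^ 2 = c • p) :
    a = √(c / b) • p :=
  hp.eq_sqrt_smul_of_sq_eq_smul ha (div_nonneg hc hb.le) <| by
    rw [div_eq_inv_mul, ← smul_smul, ← h, inv_smul_smul₀ hb.ne']

end StarProjection

namespace Matrix

section Centering

variable (ι 𝕜 : Type*) [Fintype ι] [DecidableEq ι] [RCLike 𝕜]

def centeringMatrix : Matrix ι ι 𝕜 := 1 - (Fintype.card ι : 𝕜)⁻¹ • of fun _ _ => 1

theorem centeringMatrix_fin (C : ℕ) :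
    centeringMatrix (Fin C) 𝕜 = 1 - (C : 𝕜)⁻¹ • of fun _ _ => 1 := by
  rw [centeringMatrix, Fintype.card_fin]

theorem transpose_centeringMatrix : (centeringMatrix ι 𝕜)ᵀ = centeringMatrix ι 𝕜 := by
  ext i j
  simp [centeringMatrix, one_apply, eq_comm]

theorem isStarProjection_centeringMatrix : IsStarProjection (centeringMatrix ι 𝕜) := by
  have hJJ : (of fun _ _ => 1 : Matrix ι ι 𝕜) * of (fun _ _ => 1) =
      (Fintype.card ι : 𝕜) • of fun _ _ => 1 := by
    ext i j
    simp [mul_apply]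
  -- holds also when `ι` is empty, where the inverse is the junk value `0⁻¹ = 0`
  have hcard : (Fintype.card ι : 𝕜)⁻¹ * (Fintype.card ι : 𝕜)⁻¹ * Fintype.card ι =
      (Fintype.card ι : 𝕜)⁻¹ := by
    simpa only [inv_inv] using mul_self_mul_inv (Fintype.card ι : 𝕜)⁻¹
  refine ⟨?_, ?_⟩
  · rw [IsIdempotentElem, centeringMatrix, sub_mul, one_mul, mul_sub, mul_one, Matrix.smul_mul,
      Matrix.mul_smul, hJJ, smul_smul, smul_smul, hcard, sub_self, sub_zero]
  · ext i j
    simp [centeringMatrix, one_apply, eq_comm]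

end Centering

section Balanced

variable {R ι κ : Type*} [CommRing R] [Fintype ι] [DecidableEq ι] [Fintype κ]
  {W : Matrix ι κ R} {H : Matrix κ ι R} {a b : R}

theorem smul_transpose_mul_self_sq_of_smul_eq (h : a • (Wᵀ * W) = b • (H * Hᵀ)) :
    b • (Hᵀ * H) ^ 2 = a • ((W * H)ᵀ * (W * H)) := by
  calc b • (Hᵀ * H) ^ 2 = Hᵀ * (b • (H * Hᵀ)) * H := by
        simp only [sq, Matrix.mul_smul, Matrix.smul_mul, Matrix.mul_assoc]
    _ = a • ((W * H)ᵀ * (W * H)) := by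
        simp only [← h, transpose_mul, Matrix.mul_smul, Matrix.smul_mul, Matrix.mul_assoc]

theorem smul_mul_transpose_self_sq_of_smul_eq (h : a • (Wᵀ * W) = b • (H * Hᵀ)) :
    a • (W * Wᵀ) ^ 2 = b • ((W * H) * (W * H)ᵀ) := by
  calc a • (W * Wᵀ) ^ 2 = W * (a • (Wᵀ * W)) * Wᵀ := by
        simp only [sq, Matrix.mul_smul, Matrix.smul_mul, Matrix.mul_assoc]
    _ = b • ((W * H) * (W * H)ᵀ) := by
        simp only [h, transpose_mul, Matrix.mul_smul, Matrix.smul_mul, Matrix.mul_assoc]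

end Balanced

end Matrix

open scoped MatrixOrder in
theorem stmt_14_general (C n : ℕ) (μ m : ℝ) (hμ : 0 < μ) (hm : 0 < m)
    (W : Matrix (Fin C) (Fin n) ℝ) (H1 : Matrix (Fin n) (Fin C) ℝ)
    (hres : W * H1 + (C : ℝ)⁻¹ • Matrix.of (fun _ _ : Fin C => (1 : ℝ)) = 1)
    (hinv : μ • (Wᵀ * W) = m • (H1 * H1ᵀ)) :
    H1ᵀ * H1 = Real.sqrt (μ / m) •
        ((1 : Matrix (Fin C) (Fin C) ℝ) - (C : ℝ)⁻¹ • Matrix.of (fun _ _ : Fin C => (1 : ℝ))) ∧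
    W * Wᵀ = Real.sqrt (m / μ) •
        ((1 : Matrix (Fin C) (Fin C) ℝ) - (C : ℝ)⁻¹ • Matrix.of (fun _ _ : Fin C => (1 : ℝ))) := by
  have hWH : W * H1 = centeringMatrix (Fin C) ℝ := by
    rw [centeringMatrix_fin]
    exact eq_sub_of_add_eq hres
  have hP := isStarProjection_centeringMatrix (Fin C) ℝ
  rw [← centeringMatrix_fin]
  constructor
  · refine hP.eq_sqrt_div_smul_of_smul_sq_eq_smul ?_ hm hμ.le ?_
    · simpa using (posSemidef_conjTranspose_mul_self H1).nonneg
    · rw [smul_transpose_mul_self_sq_of_smul_eq hinv, hWH, transpose_centeringMatrix,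
        hP.isIdempotentElem.eq]
  · refine hP.eq_sqrt_div_smul_of_smul_sq_eq_smul ?_ hμ hm.le ?_
    · simpa using (posSemidef_self_mul_conjTranspose W).nonneg
    · rw [smul_mul_transpose_self_sq_of_smul_eq hinv, hWH, transpose_centeringMatrix,
        hP.isIdempotentElem.eq]

/-- Suppose `W H₁ + b 1_Cᵀ = I_C` with `b = (1/C) 1_C`, `H₁ 1_C = 0`, and
`μ Wᵀ W = m H₁ H₁ᵀ` with `μ, m > 0`. Then
`H₁ᵀ H₁ = √(μ/m) (I_C - (1/C) 1_C 1_Cᵀ)` and `W Wᵀ = √(m/μ) (I_C - (1/C) 1_C 1_Cᵀ)`. -/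
theorem stmt_14 (C n : ℕ) (hC : 2 ≤ C) (hn : C ≤ n) (μ m : ℝ) (hμ : 0 < μ) (hm : 0 < m)
    (W : Matrix (Fin C) (Fin n) ℝ) (H1 : Matrix (Fin n) (Fin C) ℝ)
    (hres : W * H1 + (C : ℝ)⁻¹ • Matrix.of (fun _ _ : Fin C => (1 : ℝ)) = 1)
    (hmean : H1.mulVec (fun _ => 1) = 0)
    (hinv : μ • (Wᵀ * W) = m • (H1 * H1ᵀ)) :
    H1ᵀ * H1 = Real.sqrt (μ / m) •
        ((1 : Matrix (Fin C) (Fin C) ℝ) - (C : ℝ)⁻¹ • Matrix.of (fun _ _ : Fin C => (1 : ℝ))) ∧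
    W * Wᵀ = Real.sqrt (m / μ) •
        ((1 : Matrix (Fin C) (Fin C) ℝ) - (C : ℝ)⁻¹ • Matrix.of (fun _ _ : Fin C => (1 : ℝ))) :=
  stmt_14_general C n μ m hμ hm W H1 hres hinv
end

section
/- If W^⊤ = γ H_1 for some γ > 0 and b = β 1_C, then for every feature vector h ∈ ℝ^n, argmax_c (W h + b)_c = argmin_c ‖h - ⟨h⟩_c‖_2, provided all columns ⟨h⟩_c of H_1 have equal Euclidean norm (nearest class center decision rule, NC4). -/
open Matrix

/-- If `Wᵀ = γ H₁` for some `γ > 0`, `b = β 1_C`, and all class means (columns of `H₁`)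
have equal Euclidean norm, then for every feature vector `h`, the maximizers of
`c ↦ (W h + b)_c` are exactly the minimizers of `c ↦ ‖h - ⟨h⟩_c‖₂` (NC4). -/
theorem stmt_17 (C n : ℕ) (γ β : ℝ) (hγ : 0 < γ)
    (W : Matrix (Fin C) (Fin n) ℝ) (H1 : Matrix (Fin n) (Fin C) ℝ)
    (hdual : Wᵀ = γ • H1)
    (hnorm : ∀ c c' : Fin C, ∑ i, H1 i c ^ 2 = ∑ i, H1 i c' ^ 2)
    (h : Fin n → ℝ) (c : Fin C) :
    (∀ c', W.mulVec h c' + β ≤ W.mulVec h c + β) ↔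
    (∀ c', Real.sqrt (∑ i, (h i - H1 i c) ^ 2) ≤ Real.sqrt (∑ i, (h i - H1 i c') ^ 2)) := by
  have hW : ∀ c' : Fin C, W.mulVec h c' = γ * ∑ i, h i * H1 i c' := by
    intro c'
    simp only [Matrix.mulVec, dotProduct, Finset.mul_sum]
    refine Finset.sum_congr rfl fun i _ => ?_
    have : W c' i = γ * H1 i c' := by
      have := congrFun (congrFun hdual i) c'
      simpa [Matrix.transpose_apply, Matrix.smul_apply] using this
    rw [this]; ring
  have hsq : ∀ c' : Fin C, ∑ i, (h i - H1 i c') ^ 2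
      = (∑ i, h i ^ 2) + (∑ i, H1 i c ^ 2) - 2 * ∑ i, h i * H1 i c' := by
    intro c'
    rw [hnorm c c']
    rw [← Finset.sum_add_distrib, Finset.mul_sum, ← Finset.sum_sub_distrib]
    refine Finset.sum_congr rfl fun i _ => ?_
    ring
  constructor
  · intro H c'
    apply Real.sqrt_le_sqrt
    rw [hsq c, hsq c']
    have := H c'
    rw [hW c, hW c'] at this
    nlinarith
  · intro H c'
    have h1 := H c'
    have h2 : (∑ i, (h i - H1 i c) ^ 2) ≤ ∑ i, (h i - H1 i c') ^ 2 := by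
      nlinarith [Real.sq_sqrt (show (0:ℝ) ≤ ∑ i, (h i - H1 i c) ^ 2 from Finset.sum_nonneg fun i _ => sq_nonneg _),
        Real.sq_sqrt (show (0:ℝ) ≤ ∑ i, (h i - H1 i c') ^ 2 from Finset.sum_nonneg fun i _ => sq_nonneg _),
        Real.sqrt_nonneg (∑ i, (h i - H1 i c) ^ 2),
        Real.sqrt_nonneg (∑ i, (h i - H1 i c') ^ 2)]
    rw [hsq c, hsq c'] at h2
    rw [hW c, hW c']
    nlinarith
end
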